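/- For every β > 0, the integral ∫_{1/β}^∞ e^{−βτ}·𝔰^β(τ)·τ^{−1} dτ diverges to infinity; equivalently, ∫₀^∞ ( ∫₁^∞ e^{−t}·t^{u−2} dt ) / Γ(u) du = ∞. -/

import Mathlib

open MeasureTheory Set

/-- `𝔰^β(τ) = 4π ∫₀^∞ β^u τ^{u-1} / Γ(u) du`. -/
noncomputable def sBeta (β τ : ℝ) : ℝ :=
  4 * Real.pi * ∫ u in Set.Ioi (0 : ℝ), β ^ u * τ ^ (u - 1) / Real.Gamma u

/-!
By Tonelli the integral equals `∫₀^∞ ∫_{1/β}^∞ e^{-βτ} 4π β^u τ^{u-2} / Γ(u) dτ du`, and the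
substitution `t = βτ` turns the inner integral into `4πβ/Γ(u) · ∫₁^∞ e^{-t} t^{u-2} dt`. The last
integral is at least `Γ(u-1) - 1/(u-1)`, and since `Γ(u) = (u-1) Γ(u-1) ≥ 2` for `u ≥ 3`, the
`u`-integrand is at least `2πβ/u` there, which is not integrable at infinity.

Rewriting `𝔰^β(τ)` as a lower Lebesgue integral needs `u ↦ x^u / Γ(u)` to be integrable (otherwise
the Bochner integral defining it is `0`); this follows from `Γ(u) ≥ e^{-c} c^{u-1}` with `c = e x`.
-/

namespace Real

theorem continuous_inv_Gamma : Continuous fun x : ℝ => (Gamma x)⁻¹ := by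
  have h : (fun x : ℝ => (Gamma x)⁻¹) = fun x : ℝ => ((Complex.Gamma (x : ℂ))⁻¹).re := by
    ext x
    rw [Complex.Gamma_ofReal, ← Complex.ofReal_inv, Complex.ofReal_re]
  rw [h]
  exact Complex.continuous_re.comp
    (Complex.differentiable_one_div_Gamma.continuous.comp Complex.continuous_ofReal)

theorem measurable_Gamma : Measurable Gamma := by
  convert continuous_inv_Gamma.measurable.inv with x
  exact (inv_inv _).symm

theorem exp_neg_mul_rpow_le_Gamma {c u : ℝ} (hc : 0 < c) (hu : 1 ≤ u) :
    exp (-c) * c ^ (u - 1) ≤ Gamma u := by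
  have hint := GammaIntegral_convergent (zero_lt_one.trans_le hu)
  have hexp : IntegrableOn (fun t => exp (-t)) (Ioi c) := by
    simpa using exp_neg_integrableOn_Ioi c zero_lt_one
  calc exp (-c) * c ^ (u - 1) = ∫ t in Ioi c, exp (-t) * c ^ (u - 1) := by
        rw [integral_mul_const, integral_exp_neg_Ioi]
    _ ≤ ∫ t in Ioi c, exp (-t) * t ^ (u - 1) :=
        setIntegral_mono_on (hexp.mul_const _) (hint.mono_set (Ioi_subset_Ioi hc.le))
          measurableSet_Ioi fun t ht => by
            gcongr
            exact ht.le
    _ ≤ ∫ t in Ioi 0, exp (-t) * t ^ (u - 1) :=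
        setIntegral_mono_set hint
          ((ae_restrict_mem measurableSet_Ioi).mono fun t ht => by
            have : 0 < t := ht
            positivity)
          (Ioi_subset_Ioi hc.le).eventuallyLE
    _ = Gamma u := (Gamma_eq_integral (zero_lt_one.trans_le hu)).symm

theorem Gamma_sub_inv_le_integral_Ioi_one {s : ℝ} (hs : 0 < s) :
    Gamma s - 1 / s ≤ ∫ t in Ioi 1, exp (-t) * t ^ (s - 1) := by
  have hint := GammaIntegral_convergent hs
  have hsplit : Gamma s = (∫ t in Ioc 0 1, exp (-t) * t ^ (s - 1))
      + ∫ t in Ioi 1, exp (-t) * t ^ (s - 1) := by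
    rw [Gamma_eq_integral hs, ← Ioc_union_Ioi_eq_Ioi zero_le_one,
      setIntegral_union (Ioc_disjoint_Ioi le_rfl) measurableSet_Ioi
        (hint.mono_set Ioc_subset_Ioi_self) (hint.mono_set (Ioi_subset_Ioi zero_le_one))]
  have hpow : IntegrableOn (fun t : ℝ => t ^ (s - 1)) (Ioc 0 1) :=
    (intervalIntegrable_iff_integrableOn_Ioc_of_le zero_le_one).1
      (intervalIntegral.intervalIntegrable_rpow' (by linarith))
  have hhead : ∫ t in Ioc 0 1, exp (-t) * t ^ (s - 1) ≤ 1 / s :=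
    calc ∫ t in Ioc 0 1, exp (-t) * t ^ (s - 1) ≤ ∫ t in Ioc 0 1, t ^ (s - 1) :=
          setIntegral_mono_on (hint.mono_set Ioc_subset_Ioi_self) hpow measurableSet_Ioc
            fun t ht => mul_le_of_le_one_left (rpow_nonneg ht.1.le _)
              (exp_le_one_iff.2 (by linarith [ht.1]))
      _ = 1 / s := by
          rw [← intervalIntegral.integral_of_le zero_le_one, integral_rpow (by simp [hs]),
            sub_add_cancel, one_rpow, zero_rpow hs.ne', sub_zero]
  linarith

theorem integrableOn_rpow_div_Gamma {x : ℝ} (hx : 0 < x) :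
    IntegrableOn (fun u => x ^ u / Gamma u) (Ioi 0) := by
  have hcont : Continuous fun u => x ^ u / Gamma u :=
    (continuous_const.rpow continuous_id fun _ => Or.inl hx.ne').mul continuous_inv_Gamma
  rw [← Ioc_union_Ioi_eq_Ioi zero_le_one]
  refine (hcont.integrableOn_Icc.mono_set Ioc_subset_Icc_self).union ?_
  have hdom : IntegrableOn (fun u => exp (exp 1 * x) * (exp 1 * x) * exp (-1 * u)) (Ioi 1) :=
    (exp_neg_integrableOn_Ioi 1 zero_lt_one).const_mul _
  refine hdom.mono' hcont.aestronglyMeasurable ((ae_restrict_mem measurableSet_Ioi).mono ?_)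
  intro u (hu : 1 < u)
  have hΓ := exp_neg_mul_rpow_le_Gamma (mul_pos (exp_pos 1) hx) hu.le
  have hΓpos : 0 < Gamma u := Gamma_pos_of_pos (by linarith)
  rw [norm_of_nonneg (by positivity), div_le_iff₀ hΓpos]
  calc x ^ u = exp (exp 1 * x) * (exp 1 * x) * exp (-1 * u)
        * (exp (-(exp 1 * x)) * (exp 1 * x) ^ (u - 1)) := by
        rw [mul_rpow (exp_pos 1).le hx.le, exp_one_rpow, rpow_sub_one hx.ne']
        field_simp
        simp only [← exp_add]
        ring_nf
        exact exp_zero.symm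
    _ ≤ _ := by gcongr

end Real

open Real

noncomputable def sBetaDoubleIntegrand (β τ u : ℝ) : ℝ :=
  exp (-β * τ) * (4 * π * (β ^ u * τ ^ (u - 1) / Gamma u)) / τ

theorem measurable_sBetaDoubleIntegrand (β : ℝ) :
    Measurable (Function.uncurry (sBetaDoubleIntegrand β)) := by
  have := measurable_Gamma
  unfold sBetaDoubleIntegrand Function.uncurry
  fun_prop

theorem ofReal_sBeta_eq_lintegral {β τ : ℝ} (hβ : 0 < β) (hτ : 0 < τ) :
    ENNReal.ofReal (exp (-β * τ) * sBeta β τ / τ)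
      = ∫⁻ u in Ioi 0, ENNReal.ofReal (sBetaDoubleIntegrand β τ u) := by
  have hint : IntegrableOn (fun u => β ^ u * τ ^ (u - 1) / Gamma u) (Ioi 0) := by
    refine IntegrableOn.congr_fun ((integrableOn_rpow_div_Gamma (mul_pos hβ hτ)).const_mul τ⁻¹)
      (fun u _ => ?_) measurableSet_Ioi
    rw [mul_rpow hβ.le hτ.le, rpow_sub_one hτ.ne']
    ring
  have hnonneg : 0 ≤ᵐ[volume.restrict (Ioi 0)]
      fun u => exp (-β * τ) * (4 * π) / τ * (β ^ u * τ ^ (u - 1) / Gamma u) :=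
    (ae_restrict_mem measurableSet_Ioi).mono fun u (hu : 0 < u) => by
      have := Gamma_pos_of_pos hu
      positivity
  have hpull : exp (-β * τ) * sBeta β τ / τ
      = ∫ u in Ioi 0, exp (-β * τ) * (4 * π) / τ * (β ^ u * τ ^ (u - 1) / Gamma u) := by
    rw [integral_const_mul, sBeta]
    ring
  rw [hpull, ofReal_integral_eq_lintegral_ofReal (hint.const_mul _) hnonneg]
  refine setLIntegral_congr_fun measurableSet_Ioi fun u _ => ?_
  rw [sBetaDoubleIntegrand]
  ring_nf

theorem integral_sBetaDoubleIntegrand {β : ℝ} (hβ : 0 < β) (u : ℝ) :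
    ∫ τ in Ioi (1 / β), sBetaDoubleIntegrand β τ u
      = 4 * π * β / Gamma u * ∫ t in Ioi 1, exp (-t) * t ^ (u - 2) := by
  have hsubst := integral_comp_mul_left_Ioi (fun t => exp (-t) * t ^ (u - 2)) (1 / β) hβ
  rw [mul_one_div_cancel hβ.ne', smul_eq_mul] at hsubst
  rw [← setIntegral_congr_fun measurableSet_Ioi
      (f := fun τ => 4 * π * β ^ 2 / Gamma u * (exp (-(β * τ)) * (β * τ) ^ (u - 2))),
    integral_const_mul, hsubst]
  · field_simp
  · intro τ (hτβ : 1 / β < τ)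
    have hτ : 0 < τ := (one_div_pos.2 hβ).trans hτβ
    simp only [sBetaDoubleIntegrand]
    rw [mul_rpow hβ.le hτ.le, rpow_sub hβ, rpow_sub hτ, rpow_sub hτ, rpow_two, rpow_two, rpow_one]
    field_simp

theorem mul_inv_le_integral_sBetaDoubleIntegrand {β u : ℝ} (hβ : 0 < β) (hu : 3 ≤ u) :
    2 * π * β * u⁻¹ ≤ ∫ τ in Ioi (1 / β), sBetaDoubleIntegrand β τ u := by
  have hΓ : Gamma u = (u - 1) * Gamma (u - 1) := by
    simpa using Gamma_add_one (s := u - 1) (by linarith)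
  have hΓ2 : 2 ≤ Gamma u := by
    have h3 : Gamma 3 = 2 := by simp
    exact h3 ▸ Gamma_strictMonoOn_Ici.monotoneOn (by norm_num) (by simp; linarith) hu
  have hK := Gamma_sub_inv_le_integral_Ioi_one (s := u - 1) (by linarith)
  rw [sub_sub, one_add_one_eq_two] at hK
  rw [integral_sBetaDoubleIntegrand hβ]
  calc 2 * π * β * u⁻¹ ≤ 2 * π * β / (u - 1) := by
        rw [← div_eq_mul_inv]; gcongr <;> linarith
    _ = 4 * π * β / (u - 1) * (1 / 2) := by ring
    _ ≤ 4 * π * β / (u - 1) * (1 - 1 / Gamma u) := by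
        have : 1 / Gamma u ≤ 1 / 2 := one_div_le_one_div_of_le two_pos hΓ2
        exact mul_le_mul_of_nonneg_left (by linarith) (div_nonneg (by positivity) (by linarith))
    _ = 4 * π * β / Gamma u * (Gamma (u - 1) - 1 / (u - 1)) := by
        have : 0 < Gamma (u - 1) := Gamma_pos_of_pos (by linarith)
        have : u - 1 ≠ 0 := by linarith
        rw [hΓ]
        field_simp
    _ ≤ _ := by gcongr

theorem ofReal_mul_inv_le_lintegral_sBetaDoubleIntegrand {β u : ℝ} (hβ : 0 < β) (hu : 3 ≤ u) :
    ENNReal.ofReal (2 * π * β * u⁻¹)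
      ≤ ∫⁻ τ in Ioi (1 / β), ENNReal.ofReal (sBetaDoubleIntegrand β τ u) := by
  have hnonneg : 0 ≤ᵐ[volume.restrict (Ioi (1 / β))] fun τ => sBetaDoubleIntegrand β τ u :=
    (ae_restrict_mem measurableSet_Ioi).mono fun τ (hτ : 1 / β < τ) => by
      have : 0 < τ := (one_div_pos.2 hβ).trans hτ
      have := Gamma_pos_of_pos (by linarith : 0 < u)
      unfold sBetaDoubleIntegrand
      positivity
  have hmeas : Measurable fun τ => sBetaDoubleIntegrand β τ u :=
    (measurable_sBetaDoubleIntegrand β).comp (measurable_id.prodMk measurable_const)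
  calc ENNReal.ofReal (2 * π * β * u⁻¹)
      ≤ ENNReal.ofReal (∫ τ in Ioi (1 / β), sBetaDoubleIntegrand β τ u) :=
        ENNReal.ofReal_le_ofReal (mul_inv_le_integral_sBetaDoubleIntegrand hβ hu)
    _ ≤ _ := by
      rw [integral_eq_lintegral_of_nonneg_ae hnonneg hmeas.aestronglyMeasurable]
      exact ENNReal.ofReal_toReal_le

theorem lintegral_ofReal_mul_inv_Ioi_eq_top {c a : ℝ} (hc : 0 < c) (ha : 0 ≤ a) :
    ∫⁻ u in Ioi a, ENNReal.ofReal (c * u⁻¹) = ⊤ := by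
  by_contra h
  have hnonneg : 0 ≤ᵐ[volume.restrict (Ioi a)] fun u => c * u⁻¹ :=
    (ae_restrict_mem measurableSet_Ioi).mono fun u (hu : a < u) => by
      have : 0 < u := ha.trans_lt hu
      positivity
  rw [← ne_eq, lintegral_ofReal_ne_top_iff_integrable (by fun_prop) hnonneg] at h
  have h := h.const_mul c⁻¹
  simp only [inv_mul_cancel_left₀ hc.ne'] at h
  exact not_integrableOn_Ioi_inv h

/-- `∫_{1/β}^∞ e^{-βτ} 𝔰^β(τ) τ⁻¹ dτ = ∞`. -/
theorem stmt17 (β : ℝ) (hβ : 0 < β) :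
    ∫⁻ τ in Set.Ioi (1 / β),
      ENNReal.ofReal (Real.exp (-β * τ) * sBeta β τ / τ) = ⊤ := by
  rw [eq_top_iff]
  calc ⊤ = ∫⁻ u in Ioi 3, ENNReal.ofReal (2 * π * β * u⁻¹) :=
        (lintegral_ofReal_mul_inv_Ioi_eq_top (by positivity) (by norm_num)).symm
    _ ≤ ∫⁻ u in Ioi 3, ∫⁻ τ in Ioi (1 / β), ENNReal.ofReal (sBetaDoubleIntegrand β τ u) :=
        setLIntegral_mono' measurableSet_Ioi fun u hu =>
          ofReal_mul_inv_le_lintegral_sBetaDoubleIntegrand hβ (le_of_lt hu)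
    _ ≤ ∫⁻ u in Ioi 0, ∫⁻ τ in Ioi (1 / β), ENNReal.ofReal (sBetaDoubleIntegrand β τ u) :=
        lintegral_mono_set (Ioi_subset_Ioi (by norm_num))
    _ = ∫⁻ τ in Ioi (1 / β), ∫⁻ u in Ioi 0, ENNReal.ofReal (sBetaDoubleIntegrand β τ u) :=
        (lintegral_lintegral_swap
          ((measurable_sBetaDoubleIntegrand β).ennreal_ofReal.aemeasurable)).symm
    _ = _ := setLIntegral_congr_fun measurableSet_Ioi fun τ (hτ : 1 / β < τ) =>
        (ofReal_sBeta_eq_lintegral hβ ((one_div_pos.2 hβ).trans hτ)).symm
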